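/- Let a and n be integers with a ≥ 6, a ≡ 2 (mod 4), n ≥ 3, n even, and a(n−2) ≥ 4n. Then the Frobenius number of the triple {S_{a,n}, S_{a,n+1}, S_{a,n+2}} equals (2n−2)·S_{a,n+1} + ((a(n−2)+4n−4)/4)·S_{a,n+2} − S_{a,n}. -/

import Mathlib

/-!
Write `a = 2b`, `n = 2k + 2` and `S₀ < S₁ < S₂` for the three star numbers. Modulo `S₀`, every
combination `y S₁ + z S₂` can be pushed, without increasing it, into the L-shaped region
`[0, 4k+3) × [0, bk+2k+2) ∪ [4k+3, 8k+8) × [0, bk-2k-1)`, using three relations of the semigroup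
`⟨S₀, S₁, S₂⟩`. This region has exactly `S₀` points and reaches every residue class, so it is a
complete residue system and its values form the Apéry set of `S₀`. The largest of them,
`(4k+2) S₁ + (bk+2k+1) S₂`, exceeds the Frobenius number by `S₀` (Selmer's formula).
-/

/-- The 2-step star number `S_{a,n} = a·n·(n−2) + 1`. -/
def twoStepStar (a n : ℕ) : ℕ := a * n * (n - 2) + 1

open Finset

theorem AddSubmonoid.mem_closure_triple {a b c m : ℕ} :
    m ∈ closure ({a, b, c} : Set ℕ) ↔ ∃ x y z, x * a + y * b + z * c = m := by
  rw [← Set.singleton_union, closure_union, mem_sup]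
  simp only [mem_closure_singleton, mem_closure_pair, smul_eq_mul]
  constructor
  · rintro ⟨_, ⟨x, rfl⟩, _, ⟨y, z, rfl⟩, rfl⟩
    exact ⟨x, y, z, by ring⟩
  · rintro ⟨x, y, z, rfl⟩
    exact ⟨_, ⟨x, rfl⟩, _, ⟨y, z, rfl⟩, by ring⟩

theorem Nat.modEq_of_add_mul_eq_add_mul {x y c d s : ℕ} (h : x + c * s = y + d * s) :
    x ≡ y [MOD s] := by
  simpa [Nat.ModEq, Nat.add_mul_mod_self_right] using congrArg (· % s) h

theorem frobeniusNumber_sub_of_cover_of_least {T : Set ℕ} {s w : ℕ} (hsT : s ∈ T) (hs : 0 < s)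
    (hsw : s ≤ w) (hcover : ∀ m, ∃ u ∈ AddSubmonoid.closure T, u ≤ w ∧ u ≡ m [MOD s])
    (hleast : ∀ u ∈ AddSubmonoid.closure T, u ≡ w [MOD s] → w ≤ u) :
    FrobeniusNumber (w - s) T := by
  refine frobeniusNumber_iff.2 ⟨fun hmem ↦ ?_, fun m hm ↦ ?_⟩
  · have hws : w - s ≡ w [MOD s] := Nat.modEq_of_add_mul_eq_add_mul (c := 1) (d := 0) (by omega)
    have := hleast _ hmem hws
    omega
  · obtain ⟨u, hu, huw, hum⟩ := hcover m
    have hum' : u ≤ m := by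
      by_contra! hlt
      have := Nat.le_of_dvd (by omega) ((Nat.modEq_iff_dvd' hlt.le).1 hum.symm)
      omega
    obtain ⟨j, hj⟩ := (Nat.modEq_iff_dvd' hum').1 hum
    rw [show m = u + j • s by rw [smul_eq_mul, mul_comm, ← hj]; omega]
    exact add_mem hu (nsmul_mem (AddSubmonoid.subset_closure hsT) j)

def ReducesInto (s p q : ℕ) (L : Finset (ℕ × ℕ)) : Prop :=
  ∀ y z, ∃ y' z', (y', z') ∈ L ∧ y' * p + z' * q ≤ y * p + z * q ∧
    y' * p + z' * q ≡ y * p + z * q [MOD s]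

section Residues

variable {s p q : ℕ} {L : Finset (ℕ × ℕ)}

theorem reducesInto_of_step
    (hstep : ∀ y z, (y, z) ∉ L → ∃ y' z', y' * p + z' * q < y * p + z * q ∧
      y' * p + z' * q ≡ y * p + z * q [MOD s]) :
    ReducesInto s p q L := by
  intro y z
  induction hv : y * p + z * q using Nat.strong_induction_on generalizing y z with
  | _ v ih =>
    by_cases hyz : (y, z) ∈ L
    · exact ⟨y, z, hyz, hv.le, hv ▸ rfl⟩
    obtain ⟨y', z', hlt, hmod⟩ := hstep y z hyz
    obtain ⟨y'', z'', hmem, hle, hmod'⟩ := ih _ (hv ▸ hlt) y' z' rfl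
    exact ⟨y'', z'', hmem, hle.trans (hv ▸ hlt.le), hv ▸ hmod'.trans hmod⟩

theorem ReducesInto.exists_mem_modEq (hred : ReducesInto s p q L)
    (hseed : ∃ y₀ z₀, y₀ * p + z₀ * q ≡ 1 [MOD s]) (m : ℕ) :
    ∃ y z, (y, z) ∈ L ∧ y * p + z * q ≡ m [MOD s] := by
  obtain ⟨y₀, z₀, h₀⟩ := hseed
  obtain ⟨y, z, hmem, -, hmod⟩ := hred (m * y₀) (m * z₀)
  exact ⟨y, z, hmem, hmod.trans (by simpa [mul_add, mul_assoc] using h₀.mul_left m)⟩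

theorem ReducesInto.injOn_residue (hred : ReducesInto s p q L)
    (hseed : ∃ y₀ z₀, y₀ * p + z₀ * q ≡ 1 [MOD s]) (hcard : #L = s) [NeZero s] :
    Set.InjOn (fun yz : ℕ × ℕ ↦ ((yz.1 * p + yz.2 * q : ℕ) : ZMod s)) L := by
  refine injOn_of_surjOn_of_card_le (t := univ) _ (fun _ _ ↦ mem_coe.2 (mem_univ _))
    (fun m _ ↦ ?_) (by rw [hcard, card_univ, ZMod.card])
  obtain ⟨y, z, hmem, hmod⟩ := hred.exists_mem_modEq hseed m.val
  exact ⟨(y, z), hmem, by simpa using (ZMod.natCast_eq_natCast_iff _ _ _).2 hmod⟩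

theorem ReducesInto.frobeniusNumber (hred : ReducesInto s p q L)
    (hseed : ∃ y₀ z₀, y₀ * p + z₀ * q ≡ 1 [MOD s]) (hcard : #L = s) {y₁ z₁ : ℕ}
    (hmem : (y₁, z₁) ∈ L) (hmax : ∀ yz ∈ L, yz.1 * p + yz.2 * q ≤ y₁ * p + z₁ * q)
    (hsw : s ≤ y₁ * p + z₁ * q) :
    FrobeniusNumber (y₁ * p + z₁ * q - s) {s, p, q} := by
  have hs : 0 < s := by rw [← hcard]; exact card_pos.2 ⟨_, hmem⟩
  have : NeZero s := ⟨hs.ne'⟩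
  refine frobeniusNumber_sub_of_cover_of_least (by simp) hs hsw (fun m ↦ ?_) (fun u hu hw ↦ ?_)
  · obtain ⟨y, z, hyz, hmod⟩ := hred.exists_mem_modEq hseed m
    exact ⟨y * p + z * q, AddSubmonoid.mem_closure_triple.2 ⟨0, y, z, by ring⟩,
      hmax (y, z) hyz, hmod⟩
  · obtain ⟨x, y, z, rfl⟩ := AddSubmonoid.mem_closure_triple.1 hu
    obtain ⟨y', z', hmem', hle, hmod⟩ := hred y z
    have hx : y * p + z * q ≡ x * s + y * p + z * q [MOD s] := by
      simp [Nat.ModEq, add_assoc]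
    have : (y', z') = (y₁, z₁) := hred.injOn_residue hseed hcard hmem' hmem <|
      (ZMod.natCast_eq_natCast_iff _ _ _).2 (hmod.trans (hx.trans hw))
    obtain ⟨rfl, rfl⟩ := Prod.mk.inj this
    omega

end Residues

def staircase (Y₁ Y₂ Z₁ Z₂ : ℕ) : Finset (ℕ × ℕ) :=
  range Y₁ ×ˢ range Z₁ ∪ Ico Y₁ Y₂ ×ˢ range Z₂

section Staircase

variable {s p q Y₁ Y₂ Z₁ Z₂ X D : ℕ}

theorem mem_staircase {y z : ℕ} :
    (y, z) ∈ staircase Y₁ Y₂ Z₁ Z₂ ↔ y < Y₁ ∧ z < Z₁ ∨ Y₁ ≤ y ∧ y < Y₂ ∧ z < Z₂ := by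
  simp [staircase, and_assoc]

theorem card_staircase : #(staircase Y₁ Y₂ Z₁ Z₂) = Y₁ * Z₁ + (Y₂ - Y₁) * Z₂ := by
  rw [staircase, card_union_of_disjoint, card_product, card_product, card_range, card_range,
    card_range, Nat.card_Ico]
  rw [disjoint_left]
  rintro ⟨y, z⟩ h₁ h₂
  simp only [mem_product, mem_range, mem_Ico] at h₁ h₂
  omega

/-- The three moves are `(y, z) ↦ (y + D, z - Z₁)`, `(y - Y₂, z + X)` and `(y - Y₁, z - Z₂)`;
a point outside the staircase admits one of them. -/
theorem reducesInto_staircase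
    (h₁ : Y₁ * p + Z₂ * q ≡ 0 [MOD s]) (h₁pos : 0 < Y₁ * p + Z₂ * q)
    (h₂ : Y₂ * p ≡ X * q [MOD s]) (h₂lt : X * q < Y₂ * p)
    (h₃ : Z₁ * q ≡ D * p [MOD s]) (h₃lt : D * p < Z₁ * q) :
    ReducesInto s p q (staircase Y₁ Y₂ Z₁ Z₂) := by
  refine reducesInto_of_step fun y z hyz ↦ ?_
  rw [mem_staircase] at hyz
  by_cases hz : Z₁ ≤ z
  · obtain ⟨z', rfl⟩ := Nat.exists_eq_add_of_le hz
    refine ⟨y + D, z', by linarith, ?_⟩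
    convert h₃.symm.add_left (y * p + z' * q) using 1 <;> ring
  by_cases hy : Y₂ ≤ y
  · obtain ⟨y', rfl⟩ := Nat.exists_eq_add_of_le hy
    refine ⟨y', z + X, by linarith, ?_⟩
    convert h₂.symm.add_left (y' * p + z * q) using 1 <;> ring
  obtain ⟨⟨y', rfl⟩, ⟨z', rfl⟩⟩ : (∃ y', y = Y₁ + y') ∧ ∃ z', z = Z₂ + z' :=
    ⟨Nat.exists_eq_add_of_le (by omega), Nat.exists_eq_add_of_le (by omega)⟩
  refine ⟨y', z', by linarith, ?_⟩
  convert h₁.symm.add_left (y' * p + z' * q) using 1 <;> ring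

end Staircase

theorem twoStepStar_add_two (a m : ℕ) : twoStepStar a (m + 2) = a * (m + 2) * m + 1 := by
  simp [twoStepStar]

section TwoStepStar

variable {b k e : ℕ}

local notation "S₀" => twoStepStar (2 * b) (2 * k + 2)
local notation "S₁" => twoStepStar (2 * b) (2 * k + 2 + 1)
local notation "S₂" => twoStepStar (2 * b) (2 * k + 2 + 2)

/-- Modulo `S₀`, `2b` has inverse `-4k(k+1)`, `S₁ ≡ 2b(4k+3)`, `S₂ ≡ 2b(8k+8)`, and
`(4k+3)² - (2k+1)(8k+8) = 1`. -/
theorem exists_modEq_one_twoStepStar : ∃ y₀ z₀, y₀ * S₁ + z₀ * S₂ ≡ 1 [MOD S₀] := by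
  refine ⟨8 * b * k * (k + 1) * (4 * k * (k + 1) * (4 * k + 3)), 4 * k * (k + 1) * (2 * k + 1),
    Nat.modEq_of_add_mul_eq_add_mul (c := 1)
      (d := 8 * b * k * (k + 1) * (4 * k * (k + 1) * (4 * k + 3)) + 4 * k * (k + 1) * (2 * k + 1)
        + 8 * b * k * (k + 1) * (8 * (k + 1) * (2 * k + 1)) + 8 * b * k * (k + 1)) ?_⟩
  rw [twoStepStar_add_two (2 * b) (2 * k + 1), twoStepStar_add_two, twoStepStar_add_two]
  ring

theorem reducesInto_staircase_twoStepStar (he : b * k = e + 2 * k + 2) :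
    ReducesInto S₀ S₁ S₂ (staircase (4 * k + 3) (8 * k + 8) (e + 4 * k + 4) (e + 1)) := by
  have hb : 0 < b := Nat.pos_of_ne_zero (by rintro rfl; omega)
  have h₁ : (4 * k + 3) * S₁ + (e + 1) * S₂ + 0 * S₀ = 0 + (e + 2 * b + 4 * k + 4) * S₀ := by
    rw [twoStepStar_add_two (2 * b) (2 * k + 1), twoStepStar_add_two, twoStepStar_add_two]
    linear_combination 16 * b * (k + 1) * he.symm
  have h₂ : (8 * k + 8) * S₁ + 0 * S₀ = (4 * k + 3) * S₂ + (4 * k + 5) * S₀ := by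
    rw [twoStepStar_add_two (2 * b) (2 * k + 1), twoStepStar_add_two, twoStepStar_add_two]
    ring
  have h₃ : (e + 4 * k + 4) * S₂ + 1 * S₀ = (4 * k + 5) * S₁ + (e + 2 * b) * S₀ := by
    rw [twoStepStar_add_two (2 * b) (2 * k + 1), twoStepStar_add_two, twoStepStar_add_two]
    linear_combination 16 * b * (k + 1) * he.symm
  have hS₀ : 0 < S₀ := Nat.succ_pos _
  exact reducesInto_staircase (Nat.modEq_of_add_mul_eq_add_mul h₁) (by nlinarith)
    (Nat.modEq_of_add_mul_eq_add_mul h₂) (by nlinarith)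
    (Nat.modEq_of_add_mul_eq_add_mul h₃) (by nlinarith)

theorem twoStepStar_le_maxApery : S₀ ≤ (4 * k + 2) * S₁ + (e + 4 * k + 3) * S₂ :=
  calc S₀ ≤ S₂ := by rw [twoStepStar_add_two, twoStepStar_add_two]; gcongr <;> omega
    _ ≤ (e + 4 * k + 3) * S₂ := Nat.le_mul_of_pos_left _ (by omega)
    _ ≤ _ := Nat.le_add_left _ _

theorem frobeniusNumber_twoStepStar_of_mul_eq (he : b * k = e + 2 * k + 2) :
    FrobeniusNumber ((4 * k + 2) * S₁ + (e + 4 * k + 3) * S₂ - S₀) {S₀, S₁, S₂} := by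
  have hb : 0 < b := Nat.pos_of_ne_zero (by rintro rfl; omega)
  have hcorner : (8 * k + 7) * S₁ + e * S₂ ≤ (4 * k + 2) * S₁ + (e + 4 * k + 3) * S₂ := by
    rw [twoStepStar_add_two (2 * b) (2 * k + 1), twoStepStar_add_two]
    nlinarith
  refine (reducesInto_staircase_twoStepStar he).frobeniusNumber exists_modEq_one_twoStepStar
    ?_ (mem_staircase.2 (.inl ⟨by omega, by omega⟩)) ?_ twoStepStar_le_maxApery
  · rw [card_staircase, twoStepStar_add_two, show 8 * k + 8 - (4 * k + 3) = 4 * k + 5 by omega]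
    linear_combination (8 * k + 8) * he.symm
  · rintro ⟨y, z⟩ hyz
    rcases mem_staircase.1 hyz with ⟨hy, hz⟩ | ⟨-, hy, hz⟩
    · gcongr <;> omega
    · calc y * S₁ + z * S₂ ≤ (8 * k + 7) * S₁ + e * S₂ := by gcongr <;> omega
        _ ≤ _ := hcorner

end TwoStepStar

theorem frobenius_twoStepStar_two_even_general (a n : ℕ) (ha4 : a % 4 = 2) (hn : 3 ≤ n) (hn2 : n % 2 = 0) (hbig : 4 * n ≤ a * (n - 2)) :
    ∃ g : ℕ,
      FrobeniusNumber g
        {twoStepStar a n, twoStepStar a (n + 1), twoStepStar a (n + 2)} ∧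
      (g : ℚ) = (2 * (n : ℚ) - 2) * twoStepStar a (n + 1) + (((a : ℚ) * ((n : ℚ) - 2) + 4 * (n : ℚ) - 4) / 4) * twoStepStar a (n + 2) - twoStepStar a n := by
  obtain ⟨b, rfl⟩ : ∃ b, a = 2 * b := ⟨a / 2, by omega⟩
  obtain ⟨k, rfl⟩ : ∃ k, n = 2 * k + 2 := ⟨n / 2 - 1, by omega⟩
  obtain ⟨e, he⟩ : ∃ e, b * k = e + 2 * k + 2 := by
    rw [Nat.add_sub_cancel] at hbig
    have : 2 * k + 2 ≤ b * k := by nlinarith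
    exact ⟨b * k - (2 * k + 2), by omega⟩
  refine ⟨_, frobeniusNumber_twoStepStar_of_mul_eq he, ?_⟩
  rw [Nat.cast_sub twoStepStar_le_maxApery]
  have he' : (b : ℚ) * k = e + 2 * k + 2 := by exact_mod_cast he
  push_cast
  linear_combination -(twoStepStar (2 * b) (2 * k + 2 + 2) : ℚ) * he'

theorem frobenius_twoStepStar_two_even (a n : ℕ) (ha : 6 ≤ a) (ha4 : a % 4 = 2) (hn : 3 ≤ n) (hn2 : n % 2 = 0) (hbig : 4 * n ≤ a * (n - 2)) :
    ∃ g : ℕ,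
      FrobeniusNumber g
        {twoStepStar a n, twoStepStar a (n + 1), twoStepStar a (n + 2)} ∧
      (g : ℚ) = (2 * (n : ℚ) - 2) * twoStepStar a (n + 1) + (((a : ℚ) * ((n : ℚ) - 2) + 4 * (n : ℚ) - 4) / 4) * twoStepStar a (n + 2) - twoStepStar a n :=
  frobenius_twoStepStar_two_even_general a n ha4 hn hn2 hbig
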